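/- Subsigning is a partial order on signature closures: the reflexive transitive closure ⊴ of the immediate subsigning relation ⊴₁ is reflexive and transitive, and it is antisymmetric, i.e., if sc₁ ⊴ sc₂ and sc₂ ⊴ sc₁ then sc₁ = sc₂. -/

import Mathlib

/-- A class signature: a class name, the names of its immediate supersignatures,
its field signatures, and its method signatures. -/
structure ClassSig (N Lb : Type) where
  name : N
  supers : List N
  fields : List (Lb × N)
  methods : List (Lb × List N × N)
deriving DecidableEq

variable {N Lb : Type} [DecidableEq N] [DecidableEq Lb]

/-- Names referenced by a class signature (supersignatures, field types,
method parameter and result types). -/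
def ClassSig.refs (s : ClassSig N Lb) (nm : N) : Prop :=
  nm ∈ s.supers ∨ (∃ fs ∈ s.fields, fs.2 = nm) ∨
    ∃ ms ∈ s.methods, nm ∈ ms.2.1 ∨ ms.2.2 = nm

def UniqueNames (se : Finset (ClassSig N Lb)) : Prop :=
  ∀ s ∈ se, ∀ s' ∈ se, s.name = s'.name → s = s'

def RefClosed (se : Finset (ClassSig N Lb)) : Prop :=
  ∀ s ∈ se, ∀ nm, s.refs nm → ∃ s' ∈ se, s'.name = nm

/-- The immediate supersignature relation on names determined by `se`. -/
def SuperRel (se : Finset (ClassSig N Lb)) (nm nm' : N) : Prop :=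
  ∃ s ∈ se, s.name = nm ∧ nm' ∈ s.supers

/-- The supersignature graph of `se` is acyclic. -/
def AcyclicEnv (se : Finset (ClassSig N Lb)) : Prop :=
  ∀ nm, ¬ Relation.TransGen (SuperRel se) nm nm

/-- Member inclusion: each signature's members include those of its immediate
supersignatures. -/
def MemIncl (se : Finset (ClassSig N Lb)) : Prop :=
  ∀ s ∈ se, ∀ nm ∈ s.supers, ∀ s' ∈ se, s'.name = nm →
    (∀ fs ∈ s'.fields, fs ∈ s.fields) ∧ (∀ ms ∈ s'.methods, ms ∈ s.methods)

def IsSigEnv (se : Finset (ClassSig N Lb)) : Prop :=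
  UniqueNames se ∧ RefClosed se ∧ AcyclicEnv se ∧ MemIncl se

/-- The direct-reference (adjacency) relation on names determined by `se`. -/
def RefRel (se : Finset (ClassSig N Lb)) (nm nm' : N) : Prop :=
  ∃ s ∈ se, s.name = nm ∧ s.refs nm'

/-- A signature closure: a pair of a root signature name and a signature
environment. -/
abbrev SigClos (N Lb : Type) := N × Finset (ClassSig N Lb)

/-- Validity of a signature closure: its environment is a signature environment
containing a signature with the root name, and the environment is minimal, i.e.
every signature in it is reachable from the root by direct references. -/
def IsSigClos (sc : SigClos N Lb) : Prop :=
  IsSigEnv sc.2 ∧ (∃ s ∈ sc.2, s.name = sc.1) ∧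
    ∀ s ∈ sc.2, Relation.ReflTransGen (RefRel sc.2) sc.1 s.name

/-- Immediate subsigning: `sc₂ ⊴₁ sc₁` iff the environment of `sc₂` extends that
of `sc₁` and the name of `sc₁` is among the supersignature names of the root
signature of `sc₂`. -/
def Subsign1 (sc₂ sc₁ : SigClos N Lb) : Prop :=
  sc₁.2 ⊆ sc₂.2 ∧ ∃ s ∈ sc₂.2, s.name = sc₂.1 ∧ sc₁.1 ∈ s.supers

/-- Subsigning: the reflexive transitive closure of immediate subsigning. -/
def Subsign (sc₂ sc₁ : SigClos N Lb) : Prop :=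
  Relation.ReflTransGen Subsign1 sc₂ sc₁

/-! Subsigning only shrinks the environment, so a subsigning chain from `sc₁` to `sc₂` is
a path from `sc₁.1` to `sc₂.1` in the supersignature graph of `sc₁.2`. If also `sc₂ ⊴ sc₁`,
the two environments coincide, and the two paths form a cycle through `sc₁.1`, which
acyclicity allows only when `sc₁.1 = sc₂.1`. -/

section

omit [DecidableEq N] [DecidableEq Lb]

theorem Relation.ReflTransGen.antisymm_of_acyclic {α : Type*} {r : α → α → Prop} {a b : α}
    (hr : ∀ a, ¬ TransGen r a a) (hab : ReflTransGen r a b) (hba : ReflTransGen r b a) :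
    a = b := by
  rcases reflTransGen_iff_eq_or_transGen.mp hab with rfl | hab
  · rfl
  · exact absurd (hab.trans_left hba) (hr a)

theorem Subsign.env_subset {sc₁ sc₂ : SigClos N Lb} (h : Subsign sc₁ sc₂) :
    sc₂.2 ⊆ sc₁.2 := by
  induction h with
  | refl => exact Finset.Subset.refl _
  | tail _ hstep ih => exact hstep.1.trans ih

theorem Subsign.superRel {sc₁ sc₂ : SigClos N Lb} (h : Subsign sc₁ sc₂) :
    Relation.ReflTransGen (SuperRel sc₁.2) sc₁.1 sc₂.1 := by
  induction h with
  | refl => exact .refl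
  | tail hchain hstep ih =>
    obtain ⟨s, hs, hname, hsuper⟩ := hstep.2
    exact ih.tail ⟨s, Subsign.env_subset hchain hs, hname, hsuper⟩

theorem Subsign.antisymm {sc₁ sc₂ : SigClos N Lb} (hacyc : AcyclicEnv sc₁.2)
    (h₁₂ : Subsign sc₁ sc₂) (h₂₁ : Subsign sc₂ sc₁) : sc₁ = sc₂ := by
  have henv : sc₁.2 = sc₂.2 :=
    Finset.Subset.antisymm h₂₁.env_subset h₁₂.env_subset
  have hsuper₂₁ := h₂₁.superRel
  rw [← henv] at hsuper₂₁
  exact Prod.ext (h₁₂.superRel.antisymm_of_acyclic hacyc hsuper₂₁) henv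

end

/-- subsigning is a partial order on signature closures: it is
reflexive, transitive, and antisymmetric on valid signature closures. -/
theorem subsign_partialOrder :
    Reflexive (Subsign (N := N) (Lb := Lb)) ∧
    Transitive (Subsign (N := N) (Lb := Lb)) ∧
    ∀ sc₁ sc₂ : SigClos N Lb, IsSigClos sc₁ → IsSigClos sc₂ →
      Subsign sc₁ sc₂ → Subsign sc₂ sc₁ → sc₁ = sc₂ :=
  ⟨fun _ => .refl, fun _ _ _ => Relation.ReflTransGen.trans,
    fun _ _ h₁ _ => Subsign.antisymm h₁.1.2.2.1⟩
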